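/- arXiv:1601.02845 — 3 statements merged into one kernel-verified Lean document; each statement's English description precedes it below -/
import Mathlib

section
/- Suppose u ∈ C²((0,∞)) satisfies u'' + u'/r - k²u/r² = u(-t + 2v + 6v² + 2u²) on (0,∞) for some function v and integer k, and η ∈ C_c^∞((0,∞)). Then ∫₀^∞ [((uη)')² + (6v² + 2u² - t + 2v + k²/r²)(uη)²] r dr = ∫₀^∞ (u η')² r dr. -/
open MeasureTheory

/-- Integral identity `ℬ(η)`: if `u'' + u'/r - k²u/r² = u(-t + 2v + 6v² + 2u²)` on `(0,∞)`,
then `∫₀^∞ [((uη)')² + (6v² + 2u² - t + 2v + k²/r²)(uη)²] r dr = ∫₀^∞ (uη')² r dr`. -/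
theorem integral_identity_B (t : ℝ) (k : ℤ) (u v : ℝ → ℝ)
    (hu : ContDiffOn ℝ 2 u (Set.Ioi 0))
    (hODE : ∀ r ∈ Set.Ioi (0 : ℝ),
      deriv (deriv u) r + deriv u r / r - (k : ℝ) ^ 2 * u r / r ^ 2
        = u r * (-t + 2 * v r + 6 * v r ^ 2 + 2 * u r ^ 2))
    (η : ℝ → ℝ) (hη : ContDiff ℝ (⊤ : ℕ∞) η) (hηc : HasCompactSupport η)
    (hηs : tsupport η ⊆ Set.Ioi 0) :
    ∫ r in Set.Ioi (0 : ℝ),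
        ((deriv (fun s => u s * η s) r) ^ 2
          + (6 * v r ^ 2 + 2 * u r ^ 2 - t + 2 * v r + (k : ℝ) ^ 2 / r ^ 2)
            * (u r * η r) ^ 2) * r
      = ∫ r in Set.Ioi (0 : ℝ), (u r * deriv η r) ^ 2 * r := by
  -- dispose of the trivial case η ≡ 0
  by_cases hne : (tsupport η).Nonempty
  swap
  · rw [Set.not_nonempty_iff_eq_empty, tsupport_eq_empty_iff] at hne
    subst hne
    have hd0 : deriv (0 : ℝ → ℝ) = fun _ => 0 := funext fun x => deriv_const x 0
    simp [hd0]
  -- choose an interval (a,b) ⊆ (0,∞) containing the support of η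
  set K := tsupport η with hK
  have hKc : IsCompact K := hηc
  have ha0 : sInf K ∈ K := hKc.sInf_mem hne
  have ha0pos : (0 : ℝ) < sInf K := hηs ha0
  set a : ℝ := sInf K / 2 with haa
  set b : ℝ := sSup K + 1 with hbb
  have hapos : 0 < a := by positivity
  have hab : a < b := by
    have h1 : sInf K ≤ sSup K := le_csSup hKc.bddAbove ha0
    simp only [haa, hbb]; linarith
  have hKsub : K ⊆ Set.Ioo a b := by
    intro x hx
    constructor
    · have : sInf K ≤ x := csInf_le hKc.bddBelow hx
      simp only [haa]; linarith
    · have : x ≤ sSup K := le_csSup hKc.bddAbove hx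
      simp only [hbb]; linarith
  have hIcc : Set.Icc a b ⊆ Set.Ioi 0 := fun x hx => lt_of_lt_of_le hapos hx.1
  -- basic differentiability facts
  have hud : DifferentiableOn ℝ u (Set.Ioi 0) := hu.differentiableOn (by norm_num)
  have hu1 : ContDiffOn ℝ 1 (deriv u) (Set.Ioi 0) :=
    hu.deriv_of_isOpen isOpen_Ioi (by norm_num)
  have hcu : ContinuousOn u (Set.Ioi 0) := hu.continuousOn
  have hcu' : ContinuousOn (deriv u) (Set.Ioi 0) := hu1.continuousOn
  have hcu'' : ContinuousOn (deriv (deriv u)) (Set.Ioi 0) :=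
    hu1.continuousOn_deriv_of_isOpen isOpen_Ioi le_rfl
  have hcη : Continuous η := hη.continuous
  have hcη' : Continuous (deriv η) := hη.continuous_deriv (by simp)
  have hder1 : ∀ x ∈ Set.Ioi (0 : ℝ), HasDerivAt u (deriv u x) x := fun x hx =>
    (hud.differentiableAt (isOpen_Ioi.mem_nhds hx)).hasDerivAt
  have hder2 : ∀ x ∈ Set.Ioi (0 : ℝ), HasDerivAt (deriv u) (deriv (deriv u) x) x := fun x hx =>
    ((hu1.differentiableOn one_ne_zero).differentiableAt (isOpen_Ioi.mem_nhds hx)).hasDerivAt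
  have hderη : ∀ x : ℝ, HasDerivAt η (deriv η x) x := fun x =>
    (hη.differentiable (by simp) x).hasDerivAt
  -- vanishing of η, deriv η outside (a,b)
  have hηz : ∀ x, x ∉ Set.Ioo a b → η x = 0 := fun x hx =>
    image_eq_zero_of_notMem_tsupport (fun h => hx (hKsub h))
  have hη'z : ∀ x, x ∉ Set.Ioo a b → deriv η x = 0 := by
    intro x hx
    by_contra h
    exact hx (hKsub (support_deriv_subset (Function.mem_support.2 h)))
  -- the two v-free integrands
  set f1 : ℝ → ℝ := fun r =>
    ((deriv u r * η r + u r * deriv η r) ^ 2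
      + (deriv (deriv u) r + deriv u r / r) * (u r * η r ^ 2)) * r with hf1
  set f2 : ℝ → ℝ := fun r => (u r * deriv η r) ^ 2 * r with hf2
  have hf1z : ∀ x, x ∉ Set.Ioo a b → f1 x = 0 := by
    intro x hx; simp [hf1, hηz x hx, hη'z x hx]
  have hf2z : ∀ x, x ∉ Set.Ioo a b → f2 x = 0 := by
    intro x hx; simp [hf2, hη'z x hx]
  -- step 1: rewrite the LHS integrand using the ODE
  have hLHS : ∫ r in Set.Ioi (0 : ℝ),
      ((deriv (fun s => u s * η s) r) ^ 2
        + (6 * v r ^ 2 + 2 * u r ^ 2 - t + 2 * v r + (k : ℝ) ^ 2 / r ^ 2)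
          * (u r * η r) ^ 2) * r
      = ∫ r in Set.Ioi (0 : ℝ), f1 r := by
    refine setIntegral_congr_fun measurableSet_Ioi (fun r hr => ?_)
    have hr0 : (0 : ℝ) < r := hr
    have hrne : r ≠ 0 := ne_of_gt hr0
    have hd : deriv (fun s => u s * η s) r = deriv u r * η r + u r * deriv η r :=
      ((hder1 r hr).mul (hderη r)).deriv
    have key : (6 * v r ^ 2 + 2 * u r ^ 2 - t + 2 * v r + (k : ℝ) ^ 2 / r ^ 2)
        * (u r * η r) ^ 2
        = (deriv (deriv u) r + deriv u r / r) * (u r * η r ^ 2) := by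
      have h2 := hODE r hr
      calc (6 * v r ^ 2 + 2 * u r ^ 2 - t + 2 * v r + (k : ℝ) ^ 2 / r ^ 2) * (u r * η r) ^ 2
          = (u r * (-t + 2 * v r + 6 * v r ^ 2 + 2 * u r ^ 2)) * (u r * η r ^ 2)
            + ((k : ℝ) ^ 2 * u r / r ^ 2) * (u r * η r ^ 2) := by
            field_simp; ring
        _ = (deriv (deriv u) r + deriv u r / r - (k : ℝ) ^ 2 * u r / r ^ 2) * (u r * η r ^ 2)
            + ((k : ℝ) ^ 2 * u r / r ^ 2) * (u r * η r ^ 2) := by rw [← h2]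
        _ = (deriv (deriv u) r + deriv u r / r) * (u r * η r ^ 2) := by ring
    rw [hd, key]
  rw [hLHS]
  -- step 2: reduce to interval integrals over (a, b)
  have hred : ∀ f : ℝ → ℝ, (∀ x, x ∉ Set.Ioo a b → f x = 0) →
      ∫ r in Set.Ioi (0 : ℝ), f r = ∫ r in a..b, f r := by
    intro f hf
    have h1 : ∫ r in Set.Ioi (0 : ℝ), f r = ∫ r, f r :=
      setIntegral_eq_integral_of_forall_compl_eq_zero
        (fun x hx => hf x (fun h => hx (lt_of_lt_of_le hapos (le_of_lt h.1))))
    have h2 : ∫ r in Set.Ioc a b, f r = ∫ r, f r :=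
      setIntegral_eq_integral_of_forall_compl_eq_zero
        (fun x hx => hf x (fun h => hx ⟨h.1, le_of_lt h.2⟩))
    rw [h1, ← h2, intervalIntegral.integral_of_le hab.le]
  rw [hred f1 hf1z, hred f2 hf2z]
  -- continuity of f1 and f2 on Icc a b
  have hcf1 : ContinuousOn f1 (Set.Icc a b) := by
    apply ContinuousOn.mul _ continuousOn_id
    apply ContinuousOn.add
    · exact (((hcu'.mono hIcc).mul (hcη.continuousOn)).add
        ((hcu.mono hIcc).mul (hcη'.continuousOn))).pow 2
    · exact ((hcu''.mono hIcc).add ((hcu'.mono hIcc).div continuousOn_id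
        (fun x hx => ne_of_gt (hIcc hx)))).mul
        ((hcu.mono hIcc).mul ((hcη.continuousOn).pow 2))
  have hcf2 : ContinuousOn f2 (Set.Icc a b) :=
    (((hcu.mono hIcc).mul hcη'.continuousOn).pow 2).mul continuousOn_id
  have hint1 : IntervalIntegrable f1 volume a b :=
    hcf1.intervalIntegrable_of_Icc hab.le
  have hint2 : IntervalIntegrable f2 volume a b :=
    hcf2.intervalIntegrable_of_Icc hab.le
  -- step 3: FTC for g r = u r * u' r * η r ^ 2 * r
  set g : ℝ → ℝ := fun s => u s * deriv u s * η s ^ 2 * s with hg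
  have hgderiv : ∀ x ∈ Set.uIcc a b, HasDerivAt g (f1 x - f2 x) x := by
    intro x hx
    rw [Set.uIcc_of_le hab.le] at hx
    have hx0 : x ∈ Set.Ioi (0 : ℝ) := hIcc hx
    have hxne : x ≠ 0 := ne_of_gt hx0
    have h : HasDerivAt (fun s => u s * deriv u s * η s ^ 2 * s) _ x := ((((hder1 x hx0).mul (hder2 x hx0)).mul ((hderη x).pow 2)).mul
      (hasDerivAt_id x))
    convert h using 1
    simp only [hf1, hf2, id_eq, Pi.mul_apply, Pi.pow_apply]
    field_simp
    ring
  have hsub : ∫ x in a..b, (f1 x - f2 x) = g b - g a :=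
    intervalIntegral.integral_eq_sub_of_hasDerivAt hgderiv (hint1.sub hint2)
  have hga : g a = 0 := by
    have : η a = 0 := hηz a (fun h => lt_irrefl a h.1)
    simp [hg, this]
  have hgb : g b = 0 := by
    have : η b = 0 := hηz b (fun h => lt_irrefl b h.2)
    simp [hg, this]
  rw [intervalIntegral.integral_sub hint1 hint2, hga, hgb] at hsub
  linarith
end

section
/- Suppose u, v ∈ C³((0,∞)) satisfy u''' + u''/r - 2u'/r² + 2u/r³ = u'(-t + 2v + 6v² + 6u²) + 2uv'(1+6v) on (0,∞) (the case k = ±1), and η ∈ C_c^∞((0,∞)). Then ∫₀^∞ [((u'η)')² + (6v² + 6u² - t + 2v + 1/r²)(u'η)²] r dr = ∫₀^∞ [(u'η')² - (u'η)²/r² + 2uu'η²/r³ - 2uu'v'(1+6v)η²] r dr. -/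
open MeasureTheory

open Set

private lemma key_algebra (t r U U1 U2 U3 V V1 H H1 : ℝ) (hr : r ≠ 0)
    (hode : U3 + U2 / r - 2 * U1 / r ^ 2 + 2 * U / r ^ 3
      = U1 * (-t + 2 * V + 6 * V ^ 2 + 6 * U ^ 2) + 2 * U * V1 * (1 + 6 * V)) :
    ((U2 * H + U1 * H1) ^ 2
      + (6 * V ^ 2 + 6 * U ^ 2 - t + 2 * V + 1 / r ^ 2) * (U1 * H) ^ 2) * r
    = ((U1 * H1) ^ 2 - (U1 * H) ^ 2 / r ^ 2 + 2 * U * U1 * H ^ 2 / r ^ 3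
        - 2 * U * U1 * V1 * (1 + 6 * V) * H ^ 2) * r
      + (1 * (U1 * (U2 * H ^ 2))
        + r * (U2 * (U2 * H ^ 2) + U1 * (U3 * H ^ 2 + U2 * (↑(2:ℕ) * H ^ 1 * H1)))) := by
  field_simp at hode
  rw [show ((U2 * H + U1 * H1) ^ 2
      + (6 * V ^ 2 + 6 * U ^ 2 - t + 2 * V + 1 / r ^ 2) * (U1 * H) ^ 2) * r
    = (((U2 * H + U1 * H1) ^ 2
      + (6 * V ^ 2 + 6 * U ^ 2 - t + 2 * V) * (U1 * H) ^ 2) * r ^ 6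
      + (U1 * H) ^ 2 * r ^ 4) / r ^ 5 from by field_simp; ring]
  rw [show ((U1 * H1) ^ 2 - (U1 * H) ^ 2 / r ^ 2 + 2 * U * U1 * H ^ 2 / r ^ 3
        - 2 * U * U1 * V1 * (1 + 6 * V) * H ^ 2) * r
      + (1 * (U1 * (U2 * H ^ 2))
        + r * (U2 * (U2 * H ^ 2) + U1 * (U3 * H ^ 2 + U2 * (↑(2:ℕ) * H ^ 1 * H1))))
    = (((U1 * H1) ^ 2 - 2 * U * U1 * V1 * (1 + 6 * V) * H ^ 2) * r ^ 6
        - (U1 * H) ^ 2 * r ^ 4 + 2 * U * U1 * H ^ 2 * r ^ 3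
        + (1 * (U1 * (U2 * H ^ 2))
          + r * (U2 * (U2 * H ^ 2) + U1 * (U3 * H ^ 2 + U2 * (↑(2:ℕ) * H ^ 1 * H1)))) * r ^ 5)
      / r ^ 5 from by field_simp; ring]
  rw [div_eq_div_iff (pow_ne_zero 5 hr) (pow_ne_zero 5 hr)]
  linear_combination (-(U1 * H ^ 2) * r ^ 8) * hode

/-- Integral identity `𝒟(η)` (case `k = ±1`): if
`u''' + u''/r - 2u'/r² + 2u/r³ = u'(-t + 2v + 6v² + 6u²) + 2uv'(1+6v)` on `(0,∞)`, then
`∫₀^∞ [((u'η)')² + (6v² + 6u² - t + 2v + 1/r²)(u'η)²] r dr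
  = ∫₀^∞ [(u'η')² - (u'η)²/r² + 2uu'η²/r³ - 2uu'v'(1+6v)η²] r dr`. -/
theorem integral_identity_D (t : ℝ) (u v : ℝ → ℝ)
    (hu : ContDiffOn ℝ 3 u (Set.Ioi 0)) (hv : ContDiffOn ℝ 3 v (Set.Ioi 0))
    (hODE : ∀ r ∈ Set.Ioi (0 : ℝ),
      deriv (deriv (deriv u)) r + deriv (deriv u) r / r - 2 * deriv u r / r ^ 2
          + 2 * u r / r ^ 3
        = deriv u r * (-t + 2 * v r + 6 * v r ^ 2 + 6 * u r ^ 2)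
          + 2 * u r * deriv v r * (1 + 6 * v r))
    (η : ℝ → ℝ) (hη : ContDiff ℝ (⊤ : ℕ∞) η) (hηc : HasCompactSupport η)
    (hηs : tsupport η ⊆ Set.Ioi 0) :
    ∫ r in Set.Ioi (0 : ℝ),
        ((deriv (fun s => deriv u s * η s) r) ^ 2
          + (6 * v r ^ 2 + 6 * u r ^ 2 - t + 2 * v r + 1 / r ^ 2)
            * (deriv u r * η r) ^ 2) * r
      = ∫ r in Set.Ioi (0 : ℝ),
        ((deriv u r * deriv η r) ^ 2 - (deriv u r * η r) ^ 2 / r ^ 2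
          + 2 * u r * deriv u r * η r ^ 2 / r ^ 3
          - 2 * u r * deriv u r * deriv v r * (1 + 6 * v r) * η r ^ 2) * r := by
  set f : ℝ → ℝ := fun r =>
    ((deriv (fun s => deriv u s * η s) r) ^ 2
      + (6 * v r ^ 2 + 6 * u r ^ 2 - t + 2 * v r + 1 / r ^ 2)
        * (deriv u r * η r) ^ 2) * r with hf
  set g : ℝ → ℝ := fun r =>
    ((deriv u r * deriv η r) ^ 2 - (deriv u r * η r) ^ 2 / r ^ 2
      + 2 * u r * deriv u r * η r ^ 2 / r ^ 3
      - 2 * u r * deriv u r * deriv v r * (1 + 6 * v r) * η r ^ 2) * r with hg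
  set F : ℝ → ℝ := fun s => s * (deriv u s * (deriv (deriv u) s * η s ^ 2)) with hF
  set E : ℝ → ℝ := fun r =>
    1 * (deriv u r * (deriv (deriv u) r * η r ^ 2))
      + r * (deriv (deriv u) r * (deriv (deriv u) r * η r ^ 2)
        + deriv u r * (deriv (deriv (deriv u)) r * η r ^ 2
          + deriv (deriv u) r * (↑(2:ℕ) * η r ^ 1 * deriv η r))) with hE
  -- regularity
  have hu1 : ContDiffOn ℝ 2 (deriv u) (Set.Ioi 0) :=
    hu.deriv_of_isOpen isOpen_Ioi (by norm_num)
  have hu2 : ContDiffOn ℝ 1 (deriv (deriv u)) (Set.Ioi 0) :=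
    hu1.deriv_of_isOpen isOpen_Ioi (by norm_num)
  have hcu : ContinuousOn u (Set.Ioi 0) := hu.continuousOn
  have hcu1 : ContinuousOn (deriv u) (Set.Ioi 0) := hu1.continuousOn
  have hcu2 : ContinuousOn (deriv (deriv u)) (Set.Ioi 0) := hu2.continuousOn
  have hcu3 : ContinuousOn (deriv (deriv (deriv u))) (Set.Ioi 0) :=
    hu2.continuousOn_deriv_of_isOpen isOpen_Ioi le_rfl
  have hcv : ContinuousOn v (Set.Ioi 0) := hv.continuousOn
  have hv1 : ContDiffOn ℝ 2 (deriv v) (Set.Ioi 0) :=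
    hv.deriv_of_isOpen isOpen_Ioi (by norm_num)
  have hcv1 : ContinuousOn (deriv v) (Set.Ioi 0) := hv1.continuousOn
  have hcη : Continuous η := hη.continuous
  have hcη1 : Continuous (deriv η) := hη.continuous_deriv (by simp)
  have hDu1 : ∀ r ∈ Set.Ioi (0:ℝ), HasDerivAt (deriv u) (deriv (deriv u) r) r := fun r hr =>
    ((hu1.differentiableOn (by norm_num)).differentiableAt
      (isOpen_Ioi.mem_nhds hr)).hasDerivAt
  have hDu2 : ∀ r ∈ Set.Ioi (0:ℝ),
      HasDerivAt (deriv (deriv u)) (deriv (deriv (deriv u)) r) r := fun r hr =>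
    ((hu2.differentiableOn one_ne_zero).differentiableAt (isOpen_Ioi.mem_nhds hr)).hasDerivAt
  have hDη : ∀ r : ℝ, HasDerivAt η (deriv η r) r := fun r =>
    (hη.differentiable (by simp)).differentiableAt.hasDerivAt
  have hderiv_mul : ∀ r ∈ Set.Ioi (0:ℝ),
      deriv (fun s => deriv u s * η s) r
        = deriv (deriv u) r * η r + deriv u r * deriv η r := fun r hr =>
    ((hDu1 r hr).mul (hDη r)).deriv
  have hFE : ∀ r ∈ Set.Ioi (0:ℝ), HasDerivAt F (E r) r := fun r hr =>
    (hasDerivAt_id r).mul ((hDu1 r hr).mul (((hDu2 r hr).mul ((hDη r).pow 2))))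
  -- support interval
  obtain ⟨a, b, ha, hab, hKab⟩ :
      ∃ a b : ℝ, 0 < a ∧ a ≤ b ∧ tsupport η ⊆ Set.Ioo a b := by
    rcases (tsupport η).eq_empty_or_nonempty with hK | hK
    · exact ⟨1, 2, by norm_num, by norm_num, by rw [hK]; exact empty_subset _⟩
    · have hKc : IsCompact (tsupport η) := hηc
      obtain ⟨x, hxK, hxmin⟩ := hKc.exists_isLeast hK
      obtain ⟨y, hyK, hymax⟩ := hKc.exists_isGreatest hK
      have hx0 : 0 < x := hηs hxK
      refine ⟨x / 2, y + 1, by linarith, ?_, ?_⟩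
      · have : x ≤ y := hxmin hyK
        linarith
      · intro z hz
        exact ⟨by have := hxmin hz; linarith, by have := hymax hz; linarith⟩
  have hIcc : Set.Icc a b ⊆ Set.Ioi 0 := fun x hx => lt_of_lt_of_le ha hx.1
  -- vanishing off the support
  have hη0 : ∀ r, r ∉ tsupport η → η r = 0 := fun r hr => image_eq_zero_of_notMem_tsupport hr
  have hη'0 : ∀ r, r ∉ tsupport η → deriv η r = 0 := by
    intro r hr
    by_contra h
    exact hr (support_deriv_subset (by simpa using h))
  have hm0 : ∀ r, r ∉ tsupport η → deriv (fun s => deriv u s * η s) r = 0 := by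
    intro r hr
    have hsub : tsupport (fun s => deriv u s * η s) ⊆ tsupport η :=
      closure_minimal (fun x hx => subset_tsupport η (by
        simp only [Function.mem_support] at hx ⊢
        intro h0; exact hx (by simp [h0]))) (isClosed_tsupport η)
    by_contra h
    exact hr (hsub (support_deriv_subset (by simpa using h)))
  have hf0 : ∀ r, r ∉ Set.Ioc a b → f r = 0 := by
    intro r hr
    have hrK : r ∉ tsupport η := fun h => hr (Ioo_subset_Ioc_self (hKab h))
    simp [hf, hm0 r hrK, hη0 r hrK]
  have hg0 : ∀ r, r ∉ Set.Ioc a b → g r = 0 := by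
    intro r hr
    have hrK : r ∉ tsupport η := fun h => hr (Ioo_subset_Ioc_self (hKab h))
    simp [hg, hη0 r hrK, hη'0 r hrK]
  -- pointwise identity
  have hkey : ∀ r ∈ Set.Ioi (0:ℝ), f r = g r + E r := by
    intro r hr
    rw [hf, hg, hE]
    simp only [hderiv_mul r hr]
    exact key_algebra t r (u r) (deriv u r) (deriv (deriv u) r) (deriv (deriv (deriv u)) r)
      (v r) (deriv v r) (η r) (deriv η r) (ne_of_gt hr) (hODE r hr)
  -- continuity of g and E on [a, b]
  have hgc : ContinuousOn g (Set.Icc a b) := by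
    rw [hg]
    refine ContinuousOn.mul ?_ continuousOn_id
    refine ContinuousOn.sub (ContinuousOn.add (ContinuousOn.sub ?_ ?_) ?_) ?_
    · exact ((hcu1.mono hIcc).mul hcη1.continuousOn).pow 2
    · exact (((hcu1.mono hIcc).mul hcη.continuousOn).pow 2).div
        ((continuous_pow 2).continuousOn)
        (fun x hx => pow_ne_zero 2 (ne_of_gt (hIcc hx)))
    · exact ((((continuousOn_const.mul (hcu.mono hIcc)).mul (hcu1.mono hIcc)).mul
        (hcη.continuousOn.pow 2))).div ((continuous_pow 3).continuousOn)
        (fun x hx => pow_ne_zero 3 (ne_of_gt (hIcc hx)))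
    · exact ((((continuousOn_const.mul (hcu.mono hIcc)).mul (hcu1.mono hIcc)).mul
        (hcv1.mono hIcc)).mul (continuousOn_const.add
          (continuousOn_const.mul (hcv.mono hIcc)))).mul (hcη.continuousOn.pow 2)
  have hEc : ContinuousOn E (Set.Icc a b) := by
    rw [hE]
    refine ContinuousOn.add ?_ ?_
    · exact continuousOn_const.mul ((hcu1.mono hIcc).mul
        ((hcu2.mono hIcc).mul (hcη.continuousOn.pow 2)))
    · exact continuousOn_id.mul
        (((hcu2.mono hIcc).mul ((hcu2.mono hIcc).mul (hcη.continuousOn.pow 2))).add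
          ((hcu1.mono hIcc).mul (((hcu3.mono hIcc).mul (hcη.continuousOn.pow 2)).add
            ((hcu2.mono hIcc).mul ((continuousOn_const.mul (hcη.continuousOn.pow 1)).mul
              hcη1.continuousOn)))))
  have hgint : IntervalIntegrable g volume a b := by
    apply ContinuousOn.intervalIntegrable
    rwa [Set.uIcc_of_le hab]
  have hEint : IntervalIntegrable E volume a b := by
    apply ContinuousOn.intervalIntegrable
    rwa [Set.uIcc_of_le hab]
  -- reduce set integrals to interval integrals
  have hred : ∀ h : ℝ → ℝ, (∀ r, r ∉ Set.Ioc a b → h r = 0) →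
      (∫ r in Set.Ioi (0:ℝ), h r) = ∫ r in a..b, h r := by
    intro h h0
    rw [intervalIntegral.integral_of_le hab,
      setIntegral_eq_integral_of_forall_compl_eq_zero
        (fun x (hx : x ∉ Set.Ioi (0:ℝ)) => h0 x (fun hx2 => hx (lt_trans ha hx2.1))),
      setIntegral_eq_integral_of_forall_compl_eq_zero
        (fun x (hx : x ∉ Set.Ioc a b) => h0 x hx)]
  -- interval integral of E vanishes
  have hFa : F a = 0 := by
    have : a ∉ tsupport η := fun h => (lt_irrefl a (hKab h).1)
    simp [hF, hη0 a this]
  have hFb : F b = 0 := by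
    have : b ∉ tsupport η := fun h => (lt_irrefl b (hKab h).2)
    simp [hF, hη0 b this]
  have hEzero : (∫ r in a..b, E r) = 0 := by
    rw [intervalIntegral.integral_eq_sub_of_hasDerivAt
      (fun x hx => hFE x (hIcc (by rwa [Set.uIcc_of_le hab] at hx))) hEint, hFa, hFb, sub_zero]
  -- put everything together
  calc (∫ r in Set.Ioi (0:ℝ), f r) = ∫ r in a..b, f r := hred f hf0
    _ = ∫ r in a..b, (g r + E r) := by
        apply intervalIntegral.integral_congr
        intro x hx
        exact hkey x (hIcc (by rwa [Set.uIcc_of_le hab] at hx))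
    _ = (∫ r in a..b, g r) + ∫ r in a..b, E r := intervalIntegral.integral_add hgint hEint
    _ = ∫ r in a..b, g r := by rw [hEzero, add_zero]
    _ = ∫ r in Set.Ioi (0:ℝ), g r := (hred g hg0).symm
end

section
/- Suppose u ∈ C²((0,∞)) satisfies u'' + u'/r - u/r² = u(-t + 2v + 6v² + 2u²) on (0,∞) (case k = ±1), and ζ ∈ C_c^∞((0,∞)). Then ∫₀^∞ [((uζ/r)')² + (6v² + 2u² - t + 2v + 1/r²)(uζ/r)²] r dr = ∫₀^∞ [((u/r)ζ')² + (ζ²/r⁴)(2r u u' - u²)] r dr. -/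
open MeasureTheory

/-- Integral identity `ℰ(ζ)` (case `k = ±1`): if
`u'' + u'/r - u/r² = u(-t + 2v + 6v² + 2u²)` on `(0,∞)`, then
`∫₀^∞ [((uζ/r)')² + (6v² + 2u² - t + 2v + 1/r²)(uζ/r)²] r dr
  = ∫₀^∞ [((u/r)ζ')² + (ζ²/r⁴)(2ruu' - u²)] r dr`. -/
theorem integral_identity_E (t : ℝ) (u v : ℝ → ℝ)
    (hu : ContDiffOn ℝ 2 u (Set.Ioi 0))
    (hODE : ∀ r ∈ Set.Ioi (0 : ℝ),
      deriv (deriv u) r + deriv u r / r - u r / r ^ 2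
        = u r * (-t + 2 * v r + 6 * v r ^ 2 + 2 * u r ^ 2))
    (ζ : ℝ → ℝ) (hζ : ContDiff ℝ (⊤ : ℕ∞) ζ) (hζc : HasCompactSupport ζ)
    (hζs : tsupport ζ ⊆ Set.Ioi 0) :
    ∫ r in Set.Ioi (0 : ℝ),
        ((deriv (fun s => u s * ζ s / s) r) ^ 2
          + (6 * v r ^ 2 + 2 * u r ^ 2 - t + 2 * v r + 1 / r ^ 2)
            * (u r * ζ r / r) ^ 2) * r
      = ∫ r in Set.Ioi (0 : ℝ),
        ((u r / r * deriv ζ r) ^ 2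
          + (ζ r ^ 2 / r ^ 4) * (2 * r * u r * deriv u r - u r ^ 2)) * r := by
  have hso : IsOpen (Set.Ioi (0:ℝ)) := isOpen_Ioi
  -- derivative facts for u
  have hder : ∀ r ∈ Set.Ioi (0:ℝ), HasDerivAt u (deriv u r) r := fun r hr =>
    ((hu.differentiableOn (by norm_num)).differentiableAt (hso.mem_nhds hr)).hasDerivAt
  have hu1 : ContDiffOn ℝ 1 (deriv u) (Set.Ioi 0) := hu.deriv_of_isOpen hso (by norm_num)
  have hder2 : ∀ r ∈ Set.Ioi (0:ℝ), HasDerivAt (deriv u) (deriv (deriv u) r) r := fun r hr =>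
    ((hu1.differentiableOn one_ne_zero).differentiableAt (hso.mem_nhds hr)).hasDerivAt
  have hcu : ContinuousOn u (Set.Ioi 0) := hu.continuousOn
  have hcu' : ContinuousOn (deriv u) (Set.Ioi 0) := hu1.continuousOn
  have hcu'' : ContinuousOn (deriv (deriv u)) (Set.Ioi 0) :=
    hu1.continuousOn_deriv_of_isOpen hso le_rfl
  -- facts for ζ
  have hcz : Continuous ζ := hζ.continuous
  have hdz : ∀ r, HasDerivAt ζ (deriv ζ r) r := fun r =>
    ((hζ.differentiable (by simp)) r).hasDerivAt
  have hcz' : Continuous (deriv ζ) := hζ.continuous_deriv (by simp)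
  -- off-support facts
  have hKo : IsOpen (tsupport ζ)ᶜ := (isClosed_tsupport ζ).isOpen_compl
  have hz0 : ∀ r ∉ tsupport ζ, ζ r = 0 := fun r hr => image_eq_zero_of_notMem_tsupport hr
  have hzev : ∀ r ∉ tsupport ζ, ζ =ᶠ[nhds r] (fun _ => 0) := fun r hr =>
    Filter.eventuallyEq_of_mem (hKo.mem_nhds hr) (fun x hx => hz0 x hx)
  have hz0' : ∀ r ∉ tsupport ζ, deriv ζ r = 0 := fun r hr => by
    rw [(hzev r hr).deriv_eq]; simp
  -- the key auxiliary functions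
  set h : ℝ → ℝ := fun r => (deriv u r * ζ r + u r * deriv ζ r) / r - u r * ζ r / r ^ 2 with hh
  set F : ℝ → ℝ := fun r =>
    (h r ^ 2 + (u r * deriv (deriv u) r + u r * deriv u r / r) * ζ r ^ 2 / r ^ 2) * r with hF
  set G : ℝ → ℝ := fun r =>
    ((u r / r * deriv ζ r) ^ 2 + (ζ r ^ 2 / r ^ 4) * (2 * r * u r * deriv u r - u r ^ 2)) * r
    with hG
  set Φ : ℝ → ℝ := fun r => (u r * deriv u r / r - u r ^ 2 / r ^ 2) * ζ r ^ 2 with hΦ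
  -- derivative of u ζ / r
  have hA : ∀ r ∈ Set.Ioi (0:ℝ), HasDerivAt (fun s => u s * ζ s / s) (h r) r := by
    intro r hr
    have hr0 : r ≠ 0 := ne_of_gt hr
    have := ((hder r hr).mul (hdz r)).div (hasDerivAt_id r) hr0
    refine this.congr_deriv ?_
    simp only [hh, id, Pi.mul_apply, Pi.div_apply, Pi.sub_apply, Pi.pow_apply]
    field_simp
  -- the statement's LHS integrand equals F on (0,∞), using the ODE
  have hLF : ∀ r ∈ Set.Ioi (0:ℝ),
      ((deriv (fun s => u s * ζ s / s) r) ^ 2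
        + (6 * v r ^ 2 + 2 * u r ^ 2 - t + 2 * v r + 1 / r ^ 2)
          * (u r * ζ r / r) ^ 2) * r = F r := by
    intro r hr
    have hr0 : r ≠ 0 := ne_of_gt hr
    rw [(hA r hr).deriv]
    have ode := hODE r hr
    have key : (6 * v r ^ 2 + 2 * u r ^ 2 - t + 2 * v r + 1 / r ^ 2) * u r ^ 2
        = u r * deriv (deriv u) r + u r * deriv u r / r := by
      field_simp at ode ⊢
      linear_combination (-(u r)) * ode
    simp only [hF]
    linear_combination (ζ r ^ 2 / r ^ 2 * r) * key
  -- Φ has derivative F - G on (0,∞)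
  have hC : ∀ r ∈ Set.Ioi (0:ℝ), HasDerivAt Φ (F r - G r) r := by
    intro r hr
    have hr0 : r ≠ 0 := ne_of_gt hr
    have h1 := (((hder r hr).mul (hder2 r hr)).div (hasDerivAt_id r) hr0).sub
      (((hder r hr).pow 2).div (hasDerivAt_pow 2 r) (pow_ne_zero 2 hr0))
    have h2 := h1.mul ((hdz r).pow 2)
    refine h2.congr_deriv ?_
    simp only [hF, hG, hh, id, Pi.mul_apply, Pi.div_apply, Pi.sub_apply, Pi.pow_apply]
    field_simp
    ring
  -- off the support of ζ everything vanishes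
  have hF0 : ∀ x ∉ tsupport ζ, F x = 0 := by
    intro x hx; simp [hF, hh, hz0 x hx, hz0' x hx]
  have hG0 : ∀ x ∉ tsupport ζ, G x = 0 := by
    intro x hx; simp [hG, hz0 x hx, hz0' x hx]
  have hC0 : ∀ r ∉ tsupport ζ, HasDerivAt Φ (F r - G r) r := by
    intro r hr
    rw [hF0 r hr, hG0 r hr, sub_zero]
    refine (hasDerivAt_const r (0:ℝ)).congr_of_eventuallyEq ?_
    exact Filter.eventuallyEq_of_mem (hKo.mem_nhds hr) (fun x hx => by simp [hΦ, hz0 x hx])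
  have hD : ∀ r, HasDerivAt Φ (F r - G r) r := by
    intro r
    by_cases hr : r ∈ tsupport ζ
    · exact hC r (hζs hr)
    · exact hC0 r hr
  -- continuity of F and G
  have hcF : Continuous F := by
    rw [continuous_iff_continuousAt]
    intro r
    by_cases hr : r ∈ Set.Ioi (0:ℝ)
    · have hr0 : r ≠ 0 := ne_of_gt hr
      have n : Set.Ioi (0:ℝ) ∈ nhds r := hso.mem_nhds hr
      have cu : ContinuousAt u r := hcu.continuousAt n
      have cu' : ContinuousAt (deriv u) r := hcu'.continuousAt n
      have cu'' : ContinuousAt (deriv (deriv u)) r := hcu''.continuousAt n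
      have cz : ContinuousAt ζ r := hcz.continuousAt
      have cz' : ContinuousAt (deriv ζ) r := hcz'.continuousAt
      simp only [hF, hh]
      fun_prop (disch := simp [hr0])
    · have hrK : r ∉ tsupport ζ := fun hK => hr (hζs hK)
      have : F =ᶠ[nhds r] (fun _ => 0) :=
        Filter.eventuallyEq_of_mem (hKo.mem_nhds hrK) (fun x hx => hF0 x hx)
      exact continuousAt_const.congr this.symm
  have hcG : Continuous G := by
    rw [continuous_iff_continuousAt]
    intro r
    by_cases hr : r ∈ Set.Ioi (0:ℝ)
    · have hr0 : r ≠ 0 := ne_of_gt hr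
      have n : Set.Ioi (0:ℝ) ∈ nhds r := hso.mem_nhds hr
      have cu : ContinuousAt u r := hcu.continuousAt n
      have cu' : ContinuousAt (deriv u) r := hcu'.continuousAt n
      have cz : ContinuousAt ζ r := hcz.continuousAt
      have cz' : ContinuousAt (deriv ζ) r := hcz'.continuousAt
      simp only [hG]
      fun_prop (disch := simp [hr0])
    · have hrK : r ∉ tsupport ζ := fun hK => hr (hζs hK)
      have : G =ᶠ[nhds r] (fun _ => 0) :=
        Filter.eventuallyEq_of_mem (hKo.mem_nhds hrK) (fun x hx => hG0 x hx)
      exact continuousAt_const.congr this.symm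
  -- Φ is C¹ with compact support
  have hΦdiff : Differentiable ℝ Φ := fun r => (hD r).differentiableAt
  have hΦderiv : deriv Φ = fun r => F r - G r := funext fun r => (hD r).deriv
  have hΦc1 : ContDiff ℝ 1 Φ := contDiff_one_iff_deriv.2 ⟨hΦdiff, hΦderiv ▸ (hcF.sub hcG)⟩
  have hΦsupp : HasCompactSupport Φ :=
    HasCompactSupport.intro hζc (fun x hx => by simp [hΦ, hz0 x hx])
  -- ∫ (F - G) = 0
  have hΦ0 : Φ 0 = 0 := by
    have : (0:ℝ) ∉ tsupport ζ := fun hK => lt_irrefl 0 (Set.mem_Ioi.mp (hζs hK))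
    simp [hΦ, hz0 0 this]
  have hint0 : ∫ r in Set.Ioi (0:ℝ), (F r - G r) = 0 := by
    have := HasCompactSupport.integral_Ioi_deriv_eq hΦc1 hΦsupp 0
    rw [hΦderiv] at this
    rw [this, hΦ0, neg_zero]
  -- integrability
  have hFi : IntegrableOn F (Set.Ioi 0) :=
    (hcF.integrable_of_hasCompactSupport (HasCompactSupport.intro hζc hF0)).integrableOn
  have hGi : IntegrableOn G (Set.Ioi 0) :=
    (hcG.integrable_of_hasCompactSupport (HasCompactSupport.intro hζc hG0)).integrableOn
  -- assemble
  have e1 : ∫ r in Set.Ioi (0:ℝ),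
      ((deriv (fun s => u s * ζ s / s) r) ^ 2
        + (6 * v r ^ 2 + 2 * u r ^ 2 - t + 2 * v r + 1 / r ^ 2)
          * (u r * ζ r / r) ^ 2) * r = ∫ r in Set.Ioi (0:ℝ), F r :=
    setIntegral_congr_fun measurableSet_Ioi hLF
  rw [e1]
  have := integral_sub hFi hGi
  rw [hint0] at this
  exact sub_eq_zero.mp this.symm
end
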